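/- There exists a 2-connected planar graph G and a longest path P of G such that ecc_G(P) > pe(G); that is, 2-connected planar graphs do not in general satisfy the property that every longest path is a central path. -/

import Mathlib

/-!
The witness has two hubs `0` and `1` joined by four internally disjoint paths `0 - x - y - z - 1`;
in three of them (the fans) `0` is also adjacent to `y` and `z`. Deleting both hubs leaves four
blocks of three vertices, and a path meets each hub at most once, so it visits at most three
blocks and has at most `2 + 3 * 3` vertices. The path sweeping the three fans is therefore longest,
but it misses the middle vertex `12` of the fourth block and its neighbours. A path through two
fans and the fourth block misses only the third fan, all of whose vertices are adjacent to `0`.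

For planarity: `G - 0` is a tree, so every cycle passes through `0`. In a `K₅` or `K₃,₃` minor
at most one branch set contains `0`, and the others still carry a `4`-cycle of branch sets,
which yields a cycle of `G` avoiding `0`.
-/

open SimpleGraph

variable {V : Type*} [Fintype V] [DecidableEq V]

/-- Distance from a vertex `u` to the vertex set of a walk `P`. -/
noncomputable def walkDist (G : SimpleGraph V) {a b : V} (P : G.Walk a b) (u : V) : ℕ :=
  P.support.toFinset.inf' ⟨a, List.mem_toFinset.mpr P.start_mem_support⟩ (fun x => G.dist u x)

/-- Eccentricity of a walk: max distance from any vertex of `G` to the walk. -/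
noncomputable def eccW (G : SimpleGraph V) {a b : V} (P : G.Walk a b) : ℕ :=
  Finset.univ.sup (walkDist G P)

/-- Path eccentricity of a graph. -/
noncomputable def pe (G : SimpleGraph V) : ℕ :=
  sInf {m | ∃ (a b : V) (P : G.Walk a b), P.IsPath ∧ eccW G P = m}

/-- `P` is a longest path in `G`. -/
def IsLongestPath (G : SimpleGraph V) {a b : V} (P : G.Walk a b) : Prop :=
  P.IsPath ∧ ∀ (c d : V) (Q : G.Walk c d), Q.IsPath → Q.length ≤ P.length

/-- `G` is `k`-connected. -/
def KConnected (k : ℕ) (G : SimpleGraph V) : Prop :=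
  k + 1 ≤ Fintype.card V ∧
    ∀ S : Finset V, S.card < k → (G.induce ((↑S : Set V)ᶜ)).Connected

/-- `H` is a minor of `G`: there are pairwise disjoint connected branch sets in `G`,
one for each vertex of `H`, with an edge of `G` between the branch sets of any two
adjacent vertices of `H`. -/
def IsMinorOf {W U : Type*} (H : SimpleGraph W) (G : SimpleGraph U) : Prop :=
  ∃ f : W → Set U,
    (∀ w, (f w).Nonempty) ∧
    (∀ w, (G.induce (f w)).Connected) ∧
    (Pairwise (Function.onFun Disjoint f)) ∧
    ∀ ⦃a b : W⦄, H.Adj a b → ∃ u ∈ f a, ∃ v ∈ f b, G.Adj u v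

/-- Planarity via Wagner's theorem: a graph is planar iff it has neither a `K₅`
nor a `K_{3,3}` minor. -/
def IsPlanar {U : Type*} (G : SimpleGraph U) : Prop :=
  ¬ IsMinorOf (completeGraph (Fin 5)) G ∧
  ¬ IsMinorOf (completeBipartiteGraph (Fin 3) (Fin 3)) G

namespace SimpleGraph

variable {V : Type*} {G : SimpleGraph V}

theorem connected_of_descent (hub : V) (ρ : V → ℕ)
    (h : ∀ v ≠ hub, ∃ u, G.Adj v u ∧ ρ u < ρ v) : G.Connected := by
  have reach : ∀ v, G.Reachable v hub := by
    intro v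
    induction hρ : ρ v using Nat.strong_induction_on generalizing v with
    | _ n ih =>
      by_cases hv : v = hub
      · exact hv ▸ Reachable.refl v
      · obtain ⟨u, hvu, hlt⟩ := h v hv
        exact hvu.reachable.trans (ih (ρ u) (hρ ▸ hlt) u rfl)
  exact (connected_iff_exists_forall_reachable G).mpr ⟨hub, fun v => (reach v).symm⟩

theorem connected_induce_of_descent {s : Set V} {hub : V} (hhub : hub ∈ s) (ρ : V → ℕ)
    (h : ∀ v ∈ s, v ≠ hub → ∃ u ∈ s, G.Adj v u ∧ ρ u < ρ v) : (G.induce s).Connected :=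
  connected_of_descent ⟨hub, hhub⟩ (ρ ∘ Subtype.val) fun v hv => by
    obtain ⟨u, hu, hvu, hlt⟩ := h v v.2 fun h => hv (Subtype.ext h)
    exact ⟨⟨u, hu⟩, hvu, hlt⟩

theorem exists_walk_support_subset_of_connected_induce {s : Set V}
    (hs : (G.induce s).Connected) {a b : V} (ha : a ∈ s) (hb : b ∈ s) :
    ∃ p : G.Walk a b, ∀ x ∈ p.support, x ∈ s := by
  obtain ⟨p⟩ := hs.preconnected ⟨a, ha⟩ ⟨b, hb⟩
  refine ⟨p.map (Embedding.induce s).toHom, fun x hx => ?_⟩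
  obtain ⟨y, -, rfl⟩ := List.mem_map.mp (p.support_map _ ▸ hx)
  exact y.2

/-- A vertex of a cycle of maximal potential has two distinct neighbours on the cycle, both
below it; so if every vertex other than `s` has at most one lower neighbour, the cycle meets `s`. -/
theorem Walk.IsCycle.mem_support_of_unique_lower_adj {α : Type*} [LinearOrder α] {s : V}
    (μ : V → α) (hne : ∀ u w, G.Adj u w → u ≠ s → w ≠ s → μ u ≠ μ w)
    (huniq : ∀ u w w', G.Adj u w → G.Adj u w' → u ≠ s → w ≠ s → w' ≠ s →
      μ w < μ u → μ w' < μ u → w = w')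
    {v : V} {c : G.Walk v v} (hc : c.IsCycle) : s ∈ c.support := by
  classical
  by_contra hs
  have avoid : ∀ x ∈ c.support, x ≠ s := fun x hx h => hs (h ▸ hx)
  obtain ⟨u, hu, hmax⟩ := c.support.toFinset.exists_max_image μ
    ⟨v, List.mem_toFinset.mpr c.start_mem_support⟩
  rw [List.mem_toFinset] at hu
  set c' := c.rotate u hu
  have hc' : c'.IsCycle := hc.rotate hu
  have mem : ∀ x ∈ c'.support, x ∈ c.support := fun x hx =>
    (Walk.mem_support_rotate_iff c u hu).mp hx
  have hsnd := mem _ (c'.getVert_mem_support 1)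
  have hpen := mem _ (c'.getVert_mem_support (c'.length - 1))
  have lower : ∀ w ∈ c.support, G.Adj u w → μ w < μ u := fun w hw huw =>
    (hmax w (List.mem_toFinset.mpr hw)).lt_of_ne (hne u w huw (avoid u hu) (avoid w hw)).symm
  have hadj₁ : G.Adj u c'.snd := c'.adj_snd hc'.not_nil
  have hadj₂ : G.Adj u c'.penultimate := (c'.adj_penultimate hc'.not_nil).symm
  exact hc'.snd_ne_penultimate <| huniq u _ _ hadj₁ hadj₂ (avoid u hu) (avoid _ hsnd)
    (avoid _ hpen) (lower _ hsnd hadj₁) (lower _ hpen hadj₂)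

theorem exists_isCycle_of_cyclic_branch_sets (B : Fin 4 → Set V)
    (hdisj : Pairwise (Function.onFun Disjoint B)) (hconn : ∀ i, (G.induce (B i)).Connected)
    (hadj : ∀ i, ∃ u ∈ B i, ∃ v ∈ B (i + 1), G.Adj u v) :
    ∃ (u : V) (c : G.Walk u u), c.IsCycle ∧ ∀ x ∈ c.support, ∃ i, x ∈ B i := by
  classical
  have sep : ∀ {i j x}, i ≠ j → x ∈ B i → x ∉ B j := fun hij hx =>
    Set.disjoint_left.mp (hdisj hij) hx
  obtain ⟨x0, hx0, y0, hy0, a0⟩ := hadj 0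
  obtain ⟨x1, hx1, y1, hy1, a1⟩ := hadj 1
  obtain ⟨x2, hx2, y2, hy2, a2⟩ := hadj 2
  obtain ⟨x3, hx3, y3, hy3, a3⟩ := hadj 3
  obtain ⟨w1, hw1⟩ := exists_walk_support_subset_of_connected_induce (hconn 1) hy0 hx1
  obtain ⟨w2, hw2⟩ := exists_walk_support_subset_of_connected_induce (hconn 2) hy1 hx2
  obtain ⟨w3, hw3⟩ := exists_walk_support_subset_of_connected_induce (hconn 3) hy2 hx3
  obtain ⟨w0, hw0⟩ := exists_walk_support_subset_of_connected_induce (hconn 0) hy3 hx0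
  let W : G.Walk y0 x0 := w1.append (.cons a1 (w2.append (.cons a2 (w3.append (.cons a3 w0)))))
  have hW : ∀ x ∈ W.support, ∃ i, x ∈ B i := by
    simp only [W, Walk.mem_support_append_iff, Walk.support_cons, List.mem_cons]
    rintro x (h | rfl | h | rfl | h | rfl | h)
    exacts [⟨1, hw1 x h⟩, ⟨1, hx1⟩, ⟨2, hw2 x h⟩, ⟨2, hx2⟩, ⟨3, hw3 x h⟩, ⟨3, hx3⟩, ⟨0, hw0 x h⟩]
  -- `W` runs through `B 1, B 2, B 3, B 0` in this order, so it never joins `B 0` to `B 1`.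
  have hedge : s(x0, y0) ∉ W.edges := by
    simp only [W, Walk.edges_append, Walk.edges_cons, List.mem_append, List.mem_cons]
    rintro (h | h | h | h | h | h | h)
    · exact sep (by decide) hx0 (hw1 _ (w1.fst_mem_support_of_mem_edges h))
    · rcases Sym2.eq_iff.mp h with ⟨rfl, -⟩ | ⟨rfl, -⟩
      exacts [sep (by decide) hx0 hx1, sep (by decide) hx0 hy1]
    · exact sep (by decide) hx0 (hw2 _ (w2.fst_mem_support_of_mem_edges h))
    · rcases Sym2.eq_iff.mp h with ⟨rfl, -⟩ | ⟨rfl, -⟩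
      exacts [sep (by decide) hx0 hx2, sep (by decide) hx0 hy2]
    · exact sep (by decide) hx0 (hw3 _ (w3.fst_mem_support_of_mem_edges h))
    · rcases Sym2.eq_iff.mp h with ⟨-, rfl⟩ | ⟨-, rfl⟩
      exacts [sep (by decide) hy0 hy3, sep (by decide) hy0 hx3]
    · exact sep (by decide) hy0 (hw0 _ (w0.snd_mem_support_of_mem_edges h))
  refine ⟨x0, .cons a0 W.bypass, Path.cons_isCycle ⟨_, W.bypass_isPath⟩ a0
    fun h => hedge (W.edges_bypass_subset_edges h), ?_⟩
  simp only [Walk.support_cons, List.mem_cons]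
  rintro x (rfl | hx)
  exacts [⟨0, hx0⟩, hW x (W.support_bypass_subset_support hx)]

theorem not_isMinorOf_of_forall_isCycle_mem {W : Type*} [Nonempty W] {H : SimpleGraph W} {s : V}
    (hs : ∀ (v : V) (c : G.Walk v v), c.IsCycle → s ∈ c.support)
    (hH : ∀ w, ∃ σ : Fin 4 → W, Function.Injective σ ∧ (∀ i, σ i ≠ w) ∧
      ∀ i, H.Adj (σ i) (σ (i + 1))) :
    ¬ IsMinorOf H G := by
  rintro ⟨f, -, hconn, hdisj, hadj⟩
  obtain ⟨w, hw⟩ : ∃ w, ∀ w', s ∈ f w' → w' = w := by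
    by_cases h : ∃ w, s ∈ f w
    · obtain ⟨w, hw⟩ := h
      exact ⟨w, fun w' hw' => by_contra fun hne => Set.disjoint_left.mp (hdisj hne) hw' hw⟩
    · exact ⟨Classical.arbitrary W, fun w' hw' => (h ⟨w', hw'⟩).elim⟩
  obtain ⟨σ, hσ, hσw, hσadj⟩ := hH w
  obtain ⟨u, c, hc, hcB⟩ := exists_isCycle_of_cyclic_branch_sets (f ∘ σ)
    (hdisj.comp_of_injective hσ) (fun i => hconn (σ i)) (fun i => hadj (hσadj i))
  obtain ⟨i, hi⟩ := hcB s (hs u c hc)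
  exact hσw i (hw _ hi)

theorem not_isMinorOf_completeGraph_five {s : V}
    (hs : ∀ (v : V) (c : G.Walk v v), c.IsCycle → s ∈ c.support) :
    ¬ IsMinorOf (completeGraph (Fin 5)) G :=
  not_isMinorOf_of_forall_isCycle_mem hs fun w =>
    ⟨w.succAbove, Fin.succAbove_right_injective, w.succAbove_ne,
      fun i => Fin.succAbove_right_injective.ne (by revert i; decide)⟩

theorem not_isMinorOf_completeBipartiteGraph_three_three {s : V}
    (hs : ∀ (v : V) (c : G.Walk v v), c.IsCycle → s ∈ c.support) :
    ¬ IsMinorOf (completeBipartiteGraph (Fin 3) (Fin 3)) G := by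
  refine not_isMinorOf_of_forall_isCycle_mem hs fun w => ?_
  obtain ⟨a, b, c, d, hab, hcd, ha, hb, hc, hd⟩ : ∃ a b c d : Fin 3, a ≠ b ∧ c ≠ d ∧
      .inl a ≠ w ∧ .inl b ≠ w ∧ .inr c ≠ w ∧ .inr d ≠ w := by
    revert w; decide
  refine ⟨![.inl a, .inr c, .inl b, .inr d], ?_, ?_, ?_⟩
  · intro i j
    fin_cases i <;> fin_cases j <;> simp [hab, hcd, hab.symm, hcd.symm]
  · intro i
    fin_cases i <;> assumption
  · intro i
    fin_cases i <;> simp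

theorem isPlanar_of_forall_isCycle_mem {s : V}
    (hs : ∀ (v : V) (c : G.Walk v v), c.IsCycle → s ∈ c.support) : IsPlanar G :=
  ⟨not_isMinorOf_completeGraph_five hs, not_isMinorOf_completeBipartiteGraph_three_three hs⟩

end SimpleGraph

theorem kConnected_two_of_connected_induce_compl_singleton {V : Type*} [Fintype V]
    {G : SimpleGraph V} (hcard : 3 ≤ Fintype.card V) (hG : G.Connected)
    (hdel : ∀ r, (G.induce {r}ᶜ).Connected) : KConnected 2 G := by
  refine ⟨hcard, fun S hS => ?_⟩
  obtain hS | hS : S.card = 0 ∨ S.card = 1 := by omega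
  · rw [Finset.card_eq_zero.mp hS, Finset.coe_empty, Set.compl_empty]
    exact (induceUnivIso G).connected_iff.mpr hG
  · obtain ⟨r, rfl⟩ := Finset.card_eq_one.mp hS
    rw [Finset.coe_singleton]
    exact hdel r

theorem List.card_toFinset_erase_le_count_add_one {α : Type*} [DecidableEq α] {z : α}
    {l : List α} (hl : l.IsChain fun a b => a = z ∨ b = z ∨ a = b) :
    (l.toFinset.erase z).card ≤ l.count z + 1 := by
  suffices key : ∀ (a : α) (l : List α), (a :: l).IsChain (fun a b => a = z ∨ b = z ∨ a = b) →
      ((a :: l).toFinset.erase z).card + (if a = z then 1 else 0) ≤ (a :: l).count z + 1 by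
    cases l with
    | nil => simp
    | cons a l => exact le_of_add_le_left (key a l hl)
  intro a l
  induction l generalizing a with
  | nil =>
    intro
    by_cases ha : a = z
    · simp [ha]
    · simp [ha, Finset.erase_eq_of_notMem, Ne.symm ha]
  | cons b l ih =>
    intro h
    obtain ⟨hab, hbl⟩ := List.isChain_cons_cons.mp h
    have ih := ih b hbl
    by_cases ha : a = z
    · subst ha
      simp only [List.toFinset_cons, Finset.erase_insert_eq_erase, List.count_cons_self,
        ↓reduceIte] at ih ⊢
      split_ifs at ih <;> omega
    · have hcount : (a :: b :: l).count z = (b :: l).count z := by simp [List.count_cons, ha]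
      have herase : (a :: b :: l).toFinset.erase z = insert a ((b :: l).toFinset.erase z) := by
        rw [List.toFinset_cons, Finset.erase_insert_of_ne ha]
      rw [if_neg ha, hcount, herase, add_zero]
      rcases hab with ha' | rfl | rfl
      · exact absurd ha' ha
      · rw [if_pos rfl] at ih
        exact (Finset.card_insert_le _ _).trans (by omega)
      · rw [if_neg ha] at ih
        rw [Finset.insert_eq_of_mem (by simp [ha])]
        omega

open Finset in
theorem SimpleGraph.Walk.IsPath.length_add_one_le_of_blocks {V α : Type*} [Fintype V]
    [DecidableEq α] {G : SimpleGraph V} (lab : V → α) (z : α)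
    (hlab : ∀ u v, G.Adj u v → lab u = z ∨ lab v = z ∨ lab u = lab v) {m : ℕ}
    (hm : ∀ k ≠ z, #{v | lab v = k} ≤ m) {a b : V} {p : G.Walk a b} (hp : p.IsPath) :
    p.length + 1 ≤ #{v | lab v = z} + (#{v | lab v = z} + 1) * m := by
  classical
  set s := p.support.toFinset
  set L := p.support.map lab
  have hs : #s = p.length + 1 := by
    rw [List.toFinset_card_of_nodup hp.support_nodup, p.length_support]
  have hsep : #{v ∈ s | lab v = z} ≤ #{v | lab v = z} :=
    card_le_card (filter_subset_filter _ (subset_univ _))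
  have hcount : L.count z = #{v ∈ s | lab v = z} := by
    rw [List.count, List.countP_map, List.countP_eq_length_filter,
      ← List.toFinset_card_of_nodup (hp.support_nodup.filter _)]
    congr 1
    ext
    simp [s]
  have hblocks : #(L.toFinset.erase z) ≤ L.count z + 1 :=
    List.card_toFinset_erase_le_count_add_one <|
      List.isChain_map_of_isChain lab hlab p.isChain_adj_support
  have hcover : {v ∈ s | ¬lab v = z} ⊆ (L.toFinset.erase z).biUnion fun k => {v | lab v = k} := by
    intro v hv
    simp only [mem_filter, s, List.mem_toFinset] at hv
    simp only [mem_biUnion, mem_erase, List.mem_toFinset, L, List.mem_map, mem_filter, mem_univ,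
      true_and]
    exact ⟨lab v, ⟨hv.2, v, hv.1, rfl⟩, rfl⟩
  have hrest : #{v ∈ s | ¬lab v = z} ≤ #(L.toFinset.erase z) * m :=
    (card_le_card hcover).trans
      (card_biUnion_le_card_mul _ _ _ fun k hk => hm k (ne_of_mem_erase hk))
  have hmul : #(L.toFinset.erase z) * m ≤ (#{v | lab v = z} + 1) * m :=
    Nat.mul_le_mul_right _ (by omega)
  rw [← hs, ← card_filter_add_card_filter_not (fun v => lab v = z)]
  omega

section Eccentricity

variable {V : Type*} [Fintype V] [DecidableEq V] {G : SimpleGraph V} {a b : V} {P : G.Walk a b}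

theorem pe_le_eccW (hP : P.IsPath) : pe G ≤ eccW G P :=
  Nat.sInf_le ⟨a, b, P, hP, rfl⟩

theorem eccW_le {k : ℕ} (h : ∀ u, ∃ x ∈ P.support, G.dist u x ≤ k) : eccW G P ≤ k :=
  Finset.sup_le fun u _ =>
    let ⟨_, hx, hux⟩ := h u
    (Finset.inf'_le _ (List.mem_toFinset.mpr hx)).trans hux

theorem le_eccW {k : ℕ} (u : V) (h : ∀ x ∈ P.support, k ≤ G.dist u x) : k ≤ eccW G P :=
  (Finset.le_inf' _ _ fun x hx => h x (List.mem_toFinset.mp hx)).trans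
    (Finset.le_sup (f := walkDist G P) (Finset.mem_univ u))

theorem eccW_le_one (h : ∀ u, ∃ x ∈ P.support, u = x ∨ G.Adj u x) : eccW G P ≤ 1 :=
  eccW_le fun u =>
    let ⟨x, hx, hux⟩ := h u
    ⟨x, hx, hux.elim (fun h => by simp [h]) fun h => (dist_eq_one_iff_adj.mpr h).le⟩

theorem two_le_eccW (hG : G.Connected) (u : V) (h : ∀ x ∈ P.support, u ≠ x ∧ ¬G.Adj u x) :
    2 ≤ eccW G P :=
  le_eccW u fun x hx => hG.one_lt_dist_of_ne_of_not_adj (h x hx).1 (h x hx).2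

end Eccentricity

namespace Witness

/-- Hubs `0` and `1`, joined by the paths `0 - 2 - 3 - 4 - 1`, `0 - 5 - 6 - 7 - 1`,
`0 - 8 - 9 - 10 - 1` (each also fanned out from `0`) and `0 - 11 - 12 - 13 - 1`. -/
def graph : SimpleGraph (Fin 14) :=
  SimpleGraph.fromRel fun u v => (u, v) ∈
    [(0, 2), (0, 3), (0, 4), (2, 3), (3, 4), (4, 1),
     (0, 5), (0, 6), (0, 7), (5, 6), (6, 7), (7, 1),
     (0, 8), (0, 9), (0, 10), (8, 9), (9, 10), (10, 1),
     (0, 11), (11, 12), (12, 13), (13, 1)]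

instance : DecidableRel graph.Adj :=
  inferInstanceAs (DecidableRel (SimpleGraph.fromRel _).Adj)

def distToZero : Fin 14 → ℕ := ![0, 2, 1, 1, 1, 1, 1, 1, 1, 1, 1, 1, 2, 3]

/-- Distances to `1` in `graph`; away from `0` they are depths in the tree `graph - 0`. -/
def distToOne : Fin 14 → ℕ := ![2, 0, 3, 2, 1, 3, 2, 1, 3, 2, 1, 3, 2, 1]

def block : Fin 14 → Fin 5 := ![0, 0, 1, 1, 1, 2, 2, 2, 3, 3, 3, 4, 4, 4]

def longestPath : graph.Walk 4 8 :=
  .cons (v := 3) (by decide) <| .cons (v := 2) (by decide) <| .cons (v := 0) (by decide) <|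
  .cons (v := 5) (by decide) <| .cons (v := 6) (by decide) <| .cons (v := 7) (by decide) <|
  .cons (v := 1) (by decide) <| .cons (v := 10) (by decide) <| .cons (v := 9) (by decide) <|
  .cons (by decide) .nil

def centralPath : graph.Walk 2 7 :=
  .cons (v := 3) (by decide) <| .cons (v := 4) (by decide) <| .cons (v := 1) (by decide) <|
  .cons (v := 13) (by decide) <| .cons (v := 12) (by decide) <| .cons (v := 11) (by decide) <|
  .cons (v := 0) (by decide) <| .cons (v := 5) (by decide) <| .cons (v := 6) (by decide) <|
  .cons (by decide) .nil

theorem graph_connected : graph.Connected :=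
  SimpleGraph.connected_of_descent 0 distToZero (by decide)

theorem kConnected_two : KConnected 2 graph := by
  refine kConnected_two_of_connected_induce_compl_singleton (by decide) graph_connected
    fun r => ?_
  -- Descent to `0` along `distToZero` breaks only when `0` itself or `11`, the one lower
  -- neighbour of `12`, is deleted.
  by_cases hr : r = 0 ∨ r = 11
  · refine SimpleGraph.connected_induce_of_descent (hub := 1) ?_ distToOne ?_ <;>
      rcases hr with rfl | rfl <;> decide
  · exact SimpleGraph.connected_induce_of_descent (hub := 0)
      (fun (h : (0 : Fin 14) = r) => hr (.inl h.symm))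
      distToZero (by revert r; decide)

theorem isPlanar : IsPlanar graph :=
  SimpleGraph.isPlanar_of_forall_isCycle_mem (s := 0) fun _ _ hc =>
    hc.mem_support_of_unique_lower_adj distToOne (by decide) (by decide)

theorem longestPath_isLongestPath : IsLongestPath graph longestPath := by
  refine ⟨by rw [SimpleGraph.Walk.isPath_def]; decide, fun _ _ Q hQ => ?_⟩
  have hlen := hQ.length_add_one_le_of_blocks block 0 (by decide) (m := 3) (by decide)
  have hhubs : (Finset.univ.filter fun v => block v = 0).card = 2 := by decide
  rw [hhubs] at hlen
  exact Nat.le_of_lt_succ hlen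

theorem pe_le_one : pe graph ≤ 1 :=
  (pe_le_eccW (by rw [SimpleGraph.Walk.isPath_def]; decide : centralPath.IsPath)).trans
    (eccW_le_one (by decide))

theorem two_le_eccW_longestPath : 2 ≤ eccW graph longestPath :=
  two_le_eccW graph_connected 12 (by decide)

end Witness

theorem stmt19 :
    ∃ (n : ℕ) (G : SimpleGraph (Fin n)),
      IsPlanar G ∧ KConnected 2 G ∧
      ∃ (a b : Fin n) (P : G.Walk a b), IsLongestPath G P ∧ pe G < eccW G P :=
  ⟨14, Witness.graph, Witness.isPlanar, Witness.kConnected_two, 4, 8, Witness.longestPath,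
    Witness.longestPath_isLongestPath,
    Witness.pe_le_one.trans_lt Witness.two_le_eccW_longestPath⟩
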